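/- Let G(t) = 2(1−Φ(t)) where Φ is the standard normal CDF. Then for any M>1 and b>0, ∫₀^{G⁻¹(b/M)} 1/(M·G(t)) dt ≤ C/(b·√(log(M/b))) for some absolute constant C>0, provided b/M ≤ 1/2 and M/b is large enough (say M/b ≥ e). -/

import Mathlib

/-!
On `[0, 1]` monotonicity of `G` gives `1 / G ≤ 1 / G(1) ≤ 16`. For `t ≥ 1` the Mills-type
bounds `e^{-t²/2} / (8t) ≤ G(t) ≤ e^{-t²/2} / t` give `1 / G(t) ≤ 8 t e^{t²/2}`, so the integral
over `[1, s]` is at most `8 e^{s²/2} ≤ 8 / (s G(s))`; and `log (1 / G(s)) ≤ s² + 7 ≤ 9 s²`, so `s`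
is at least `√(log (1 / G(s))) / 3`.
-/

open MeasureTheory ProbabilityTheory intervalIntegral

/-- The standard normal CDF. -/
noncomputable def stdNormalCDF (t : ℝ) : ℝ :=
  (gaussianReal 0 1 (Set.Iic t)).toReal

/-- `G(t) = 2(1 - Φ(t))`. -/
noncomputable def Gtail (t : ℝ) : ℝ := 2 * (1 - stdNormalCDF t)

open Real Set Filter

lemma mul_sqrt_log_inv_le_one {y : ℝ} (hy0 : 0 < y) (hy1 : y ≤ 1) :
    y * √(log y⁻¹) ≤ 1 := by
  have hlog : log y⁻¹ ≤ y⁻¹ := (log_le_sub_one_of_pos (inv_pos.2 hy0)).trans (by linarith)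
  calc y * √(log y⁻¹) ≤ y * √y⁻¹ := by gcongr
    _ = √y := by rw [sqrt_inv, ← div_eq_mul_inv, div_sqrt]
    _ ≤ 1 := sqrt_le_one.2 hy1

lemma integrable_exp_neg_sq_div_two : Integrable fun x : ℝ ↦ exp (-x ^ 2 / 2) :=
  (integrable_exp_neg_mul_sq (by norm_num : (0 : ℝ) < 1 / 2)).congr
    (.of_forall fun x ↦ by dsimp only; ring_nf)

lemma integrable_mul_exp_neg_sq_div_two : Integrable fun x : ℝ ↦ x * exp (-x ^ 2 / 2) :=
  (integrable_mul_exp_neg_mul_sq (by norm_num : (0 : ℝ) < 1 / 2)).congr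
    (.of_forall fun x ↦ by dsimp only; ring_nf)

lemma integral_Ioi_mul_exp_neg_sq_div_two (t : ℝ) :
    ∫ x in Ioi t, x * exp (-x ^ 2 / 2) = exp (-t ^ 2 / 2) := by
  have hderiv (x : ℝ) : HasDerivAt (fun y ↦ -exp (-y ^ 2 / 2)) (x * exp (-x ^ 2 / 2)) x := by
    have h : HasDerivAt (fun y : ℝ ↦ -y ^ 2 / 2) (-x) x :=
      ((hasDerivAt_pow 2 x).fun_neg.div_const 2).congr_deriv (by ring)
    simpa [mul_comm] using h.exp.fun_neg
  have hlim : Tendsto (fun y : ℝ ↦ -exp (-y ^ 2 / 2)) atTop (nhds 0) := by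
    simpa using (tendsto_exp_atBot.comp ((tendsto_neg_atTop_atBot.comp
      (tendsto_pow_atTop two_ne_zero)).atBot_div_const two_pos)).neg
  rw [integral_Ioi_of_hasDerivAt_of_tendsto' (fun x _ ↦ hderiv x)
    integrable_mul_exp_neg_sq_div_two.integrableOn hlim]
  ring

lemma Gtail_eq_integral_Ioi (t : ℝ) :
    Gtail t = 2 * (√(2 * π))⁻¹ * ∫ x in Ioi t, exp (-x ^ 2 / 2) := by
  have h := probReal_compl_eq_one_sub (μ := gaussianReal 0 1) (measurableSet_Iic (a := t))
  rw [compl_Iic, measureReal_def, measureReal_def,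
    gaussianReal_apply_eq_integral 0 one_ne_zero, ENNReal.toReal_ofReal
      (setIntegral_nonneg measurableSet_Ioi fun x _ ↦ gaussianPDFReal_nonneg 0 1 x)] at h
  have hpdf : ∫ x in Ioi t, gaussianPDFReal 0 1 x =
      (√(2 * π))⁻¹ * ∫ x in Ioi t, exp (-x ^ 2 / 2) := by
    rw [← MeasureTheory.integral_const_mul]
    simp [gaussianPDFReal]
  rw [Gtail, stdNormalCDF, ← h, hpdf, mul_assoc]

lemma integral_Ioi_exp_neg_sq_div_two_le {t : ℝ} (ht : 0 < t) :
    ∫ x in Ioi t, exp (-x ^ 2 / 2) ≤ exp (-t ^ 2 / 2) / t :=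
  calc ∫ x in Ioi t, exp (-x ^ 2 / 2) ≤ ∫ x in Ioi t, t⁻¹ * (x * exp (-x ^ 2 / 2)) := by
        refine setIntegral_mono_on integrable_exp_neg_sq_div_two.integrableOn
          (integrable_mul_exp_neg_sq_div_two.const_mul _).integrableOn measurableSet_Ioi
          fun x hx ↦ ?_
        rw [← mul_assoc]
        exact le_mul_of_one_le_left (exp_pos _).le ((one_le_inv_mul₀ ht).2 hx.le)
    _ = exp (-t ^ 2 / 2) / t := by
        rw [MeasureTheory.integral_const_mul, integral_Ioi_mul_exp_neg_sq_div_two, inv_mul_eq_div]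

lemma exp_neg_sq_div_two_le_integral_Ioi {t : ℝ} (ht : 1 ≤ t) :
    exp (-3 / 2) * (exp (-t ^ 2 / 2) / t) ≤ ∫ x in Ioi t, exp (-x ^ 2 / 2) := by
  have ht0 : 0 < t := one_pos.trans_le ht
  -- on `(t, t + 1/t]` one has `x ^ 2 ≤ t ^ 2 + 3`
  have hbox : ∀ x ∈ Ioc t (t + 1 / t),
      exp (-3 / 2) * exp (-t ^ 2 / 2) ≤ exp (-x ^ 2 / 2) := by
    intro x hx
    rw [← exp_add, exp_le_exp]
    have h1 : 1 / t ≤ 1 := (div_le_one ht0).2 ht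
    have h2 : t * (1 / t) = 1 := by field_simp
    nlinarith [hx.1, hx.2, one_div_pos.2 ht0]
  calc exp (-3 / 2) * (exp (-t ^ 2 / 2) / t)
      = ∫ _ in Ioc t (t + 1 / t), exp (-3 / 2) * exp (-t ^ 2 / 2) := by
        rw [setIntegral_const, Real.volume_real_Ioc_of_le (le_add_of_nonneg_right (by positivity)),
          add_sub_cancel_left, smul_eq_mul]
        ring
    _ ≤ ∫ x in Ioc t (t + 1 / t), exp (-x ^ 2 / 2) :=
        setIntegral_mono_on (integrableOn_const measure_Ioc_lt_top.ne)
          integrable_exp_neg_sq_div_two.integrableOn measurableSet_Ioc hbox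
    _ ≤ ∫ x in Ioi t, exp (-x ^ 2 / 2) :=
        setIntegral_mono_set integrable_exp_neg_sq_div_two.integrableOn
          (.of_forall fun x ↦ (exp_pos _).le) Ioc_subset_Ioi_self.eventuallyLE

lemma Gtail_pos (t : ℝ) : 0 < Gtail t := by
  have hint : 0 < ∫ x in Ioi t, exp (-x ^ 2 / 2) := by
    rw [setIntegral_pos_iff_support_of_nonneg_ae (.of_forall fun x ↦ (exp_pos _).le)
      integrable_exp_neg_sq_div_two.integrableOn]
    simp [Function.support, (exp_pos _).ne']
  rw [Gtail_eq_integral_Ioi]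
  positivity

lemma Gtail_antitone : Antitone Gtail := fun x y hxy ↦ by
  simp only [Gtail_eq_integral_Ioi]
  exact mul_le_mul_of_nonneg_left (setIntegral_mono_set integrable_exp_neg_sq_div_two.integrableOn
    (.of_forall fun x ↦ (exp_pos _).le) (Ioi_subset_Ioi hxy).eventuallyLE) (by positivity)

lemma monotone_inv_Gtail : Monotone fun t ↦ (Gtail t)⁻¹ :=
  fun _ _ hxy ↦ inv_anti₀ (Gtail_pos _) (Gtail_antitone hxy)

lemma Gtail_le {t : ℝ} (ht : 0 < t) : Gtail t ≤ exp (-t ^ 2 / 2) / t := by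
  have hconst : 2 * (√(2 * π))⁻¹ ≤ 1 := by
    rw [← div_eq_mul_inv, div_le_one (by positivity)]
    exact Real.le_sqrt_of_sq_le (by nlinarith [pi_gt_three])
  rw [Gtail_eq_integral_Ioi]
  exact (mul_le_of_le_one_left (setIntegral_nonneg measurableSet_Ioi fun x _ ↦ (exp_pos _).le)
    hconst).trans (integral_Ioi_exp_neg_sq_div_two_le ht)

lemma sqrt_two_pi_mul_exp_three_halves_le : √(2 * π) * exp (3 / 2) ≤ 16 := by
  have h3 : exp (3 / 2) ^ 2 ≤ 27 := by
    calc exp (3 / 2) ^ 2 = exp 1 ^ 3 := by rw [← exp_nat_mul, ← exp_nat_mul]; norm_num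
      _ ≤ 3 ^ 3 := by gcongr; exact exp_one_lt_three.le
      _ = 27 := by norm_num
  have hpi : √(2 * π) ^ 2 ≤ 8 := by
    rw [sq_sqrt (by positivity)]
    linarith [pi_le_four]
  nlinarith [sqrt_nonneg (2 * π), exp_pos (3 / 2), mul_le_mul hpi h3 (by positivity) (by norm_num)]

lemma inv_Gtail_le_mul_exp {t : ℝ} (ht : 1 ≤ t) :
    (Gtail t)⁻¹ ≤ 8 * (t * exp (t ^ 2 / 2)) := by
  have ht0 : 0 < t := one_pos.trans_le ht
  rw [Gtail_eq_integral_Ioi]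
  refine inv_le_of_inv_le₀ (by positivity) ?_
  calc (8 * (t * exp (t ^ 2 / 2)))⁻¹ = 16⁻¹ * (2 * (exp (-t ^ 2 / 2) / t)) := by
        rw [neg_div, exp_neg]
        field_simp
        ring
    _ ≤ (√(2 * π) * exp (3 / 2))⁻¹ * (2 * (exp (-t ^ 2 / 2) / t)) := by
        gcongr
        exact sqrt_two_pi_mul_exp_three_halves_le
    _ = 2 * (√(2 * π))⁻¹ * (exp (-3 / 2) * (exp (-t ^ 2 / 2) / t)) := by
        simp only [mul_inv, neg_div, exp_neg]
        ring
    _ ≤ 2 * (√(2 * π))⁻¹ * ∫ x in Ioi t, exp (-x ^ 2 / 2) := by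
        gcongr
        exact exp_neg_sq_div_two_le_integral_Ioi ht

lemma inv_Gtail_le_of_le_one {t : ℝ} (ht : t ≤ 1) : (Gtail t)⁻¹ ≤ 16 :=
  calc (Gtail t)⁻¹ ≤ (Gtail 1)⁻¹ := monotone_inv_Gtail ht
    _ ≤ 8 * (1 * exp (1 ^ 2 / 2)) := inv_Gtail_le_mul_exp le_rfl
    _ ≤ 16 := by
        have h : exp (1 / 2) * exp (1 / 2) < 3 := by
          rw [← exp_add, add_halves]
          exact exp_one_lt_three
        norm_num
        nlinarith [exp_pos (1 / 2)]

lemma exp_sq_div_two_le_inv_mul_Gtail {t : ℝ} (ht : 0 < t) :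
    exp (t ^ 2 / 2) ≤ (t * Gtail t)⁻¹ := by
  rw [le_inv_comm₀ (exp_pos _) (mul_pos ht (Gtail_pos t)), ← exp_neg, ← neg_div]
  exact (le_div_iff₀' ht).1 (Gtail_le ht)

lemma sqrt_log_inv_Gtail_le {t : ℝ} (ht : 1 ≤ t) : √(log (Gtail t)⁻¹) ≤ 3 * t := by
  have hinv : (Gtail t)⁻¹ ≤ 8 * exp (t ^ 2) := by
    have h : t ≤ exp (t ^ 2 / 2) := by nlinarith [add_one_le_exp (t ^ 2 / 2)]
    calc (Gtail t)⁻¹ ≤ 8 * (t * exp (t ^ 2 / 2)) := inv_Gtail_le_mul_exp ht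
      _ ≤ 8 * (exp (t ^ 2 / 2) * exp (t ^ 2 / 2)) := by gcongr
      _ = 8 * exp (t ^ 2) := by rw [← exp_add, add_halves]
  have hlog : log (Gtail t)⁻¹ ≤ t ^ 2 + 7 :=
    calc log (Gtail t)⁻¹ ≤ log (8 * exp (t ^ 2)) := log_le_log (inv_pos.2 (Gtail_pos t)) hinv
      _ = log 8 + t ^ 2 := by rw [log_mul (by norm_num) (exp_pos _).ne', log_exp]
      _ ≤ t ^ 2 + 7 := by linarith [log_le_sub_one_of_pos (by norm_num : (0 : ℝ) < 8)]
  rw [sqrt_le_left (by positivity)]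
  nlinarith

lemma intervalIntegrable_inv_Gtail (a b : ℝ) :
    IntervalIntegrable (fun t ↦ (Gtail t)⁻¹) volume a b :=
  monotone_inv_Gtail.intervalIntegrable

lemma integral_inv_Gtail_le_of_le_one {s : ℝ} (hs0 : 0 ≤ s) (hs1 : s ≤ 1) :
    ∫ t in 0..s, (Gtail t)⁻¹ ≤ 16 :=
  calc ∫ t in 0..s, (Gtail t)⁻¹ ≤ ∫ _ in 0..s, (16 : ℝ) :=
        integral_mono_on hs0 (intervalIntegrable_inv_Gtail 0 s) intervalIntegrable_const
          fun t ht ↦ inv_Gtail_le_of_le_one (ht.2.trans hs1)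
    _ = 16 * s := by rw [intervalIntegral.integral_const, smul_eq_mul, sub_zero, mul_comm]
    _ ≤ 16 := by linarith

lemma integral_inv_Gtail_from_one_le {s : ℝ} (hs : 1 ≤ s) :
    ∫ t in 1..s, (Gtail t)⁻¹ ≤ 8 * exp (s ^ 2 / 2) := by
  have hderiv (t : ℝ) :
      HasDerivAt (fun y ↦ 8 * exp (y ^ 2 / 2)) (8 * (t * exp (t ^ 2 / 2))) t := by
    have h : HasDerivAt (fun y : ℝ ↦ y ^ 2 / 2) t t :=
      ((hasDerivAt_pow 2 t).div_const 2).congr_deriv (by ring)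
    simpa [mul_comm] using h.exp.const_mul 8
  calc ∫ t in 1..s, (Gtail t)⁻¹ ≤ ∫ t in 1..s, 8 * (t * exp (t ^ 2 / 2)) :=
        integral_mono_on hs (intervalIntegrable_inv_Gtail 1 s)
          (by apply Continuous.intervalIntegrable; fun_prop)
          fun t ht ↦ inv_Gtail_le_mul_exp ht.1
    _ = 8 * exp (s ^ 2 / 2) - 8 * exp (1 ^ 2 / 2) :=
        integral_eq_sub_of_hasDerivAt (fun t _ ↦ hderiv t)
          (by apply Continuous.intervalIntegrable; fun_prop)
    _ ≤ 8 * exp (s ^ 2 / 2) := by linarith [exp_pos (1 ^ 2 / 2)]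

theorem integral_inv_Gtail_le {s : ℝ} (hs : 0 ≤ s) (hG : Gtail s < 1) :
    ∫ t in 0..s, (Gtail t)⁻¹ ≤ 40 / (Gtail s * √(log (Gtail s)⁻¹)) := by
  have hy := Gtail_pos s
  set y := Gtail s
  have hK : 0 < y * √(log y⁻¹) :=
    mul_pos hy (sqrt_pos.2 (log_pos ((one_lt_inv₀ hy).2 hG)))
  have h16 : 16 ≤ 16 / (y * √(log y⁻¹)) :=
    le_div_self (by norm_num) hK (mul_sqrt_log_inv_le_one hy hG.le)
  rcases le_or_gt s 1 with hs1 | hs1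
  · calc ∫ t in 0..s, (Gtail t)⁻¹ ≤ 16 / (y * √(log y⁻¹)) :=
          (integral_inv_Gtail_le_of_le_one hs hs1).trans h16
      _ ≤ 40 / (y * √(log y⁻¹)) := by gcongr; norm_num
  · have htail : 8 * exp (s ^ 2 / 2) ≤ 24 / (y * √(log y⁻¹)) :=
      calc 8 * exp (s ^ 2 / 2) ≤ 8 * (s * y)⁻¹ := by
            gcongr
            exact exp_sq_div_two_le_inv_mul_Gtail (one_pos.trans hs1)
        _ = 24 / (y * (3 * s)) := by field_simp; ring
        _ ≤ 24 / (y * √(log y⁻¹)) := by gcongr; exact sqrt_log_inv_Gtail_le hs1.le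
    calc ∫ t in 0..s, (Gtail t)⁻¹
          = (∫ t in 0..1, (Gtail t)⁻¹) + ∫ t in 1..s, (Gtail t)⁻¹ :=
          (integral_add_adjacent_intervals (intervalIntegrable_inv_Gtail 0 1)
            (intervalIntegrable_inv_Gtail 1 s)).symm
      _ ≤ 16 / (y * √(log y⁻¹)) + 24 / (y * √(log y⁻¹)) :=
          add_le_add ((integral_inv_Gtail_le_of_le_one zero_le_one le_rfl).trans h16)
            ((integral_inv_Gtail_from_one_le hs1.le).trans htail)
      _ = 40 / (y * √(log y⁻¹)) := by ring

/-- there is an absolute constant `C > 0` such that for all `M`, `b` with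
`0 < b`, `b ≤ M / e`, and any `s ≥ 0` with `G(s) = b / M` (i.e. `s = G⁻¹(b/M)`),
`∫₀^s 1/(M·G(t)) dt ≤ C / (b·√(log (M/b)))`. -/
theorem integral_inv_MG_le :
    ∃ C : ℝ, 0 < C ∧ ∀ M b s : ℝ, 0 < b → b ≤ M / Real.exp 1 → b / M ≤ 1 / 2 →
      0 ≤ s → Gtail s = b / M →
      ∫ t in (0:ℝ)..s, 1 / (M * Gtail t) ≤ C / (b * Real.sqrt (Real.log (M / b))) := by
  refine ⟨40, by norm_num, fun M b s hb hbe hhalf hs hGs => ?_⟩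
  have hM : 0 < M := (div_pos_iff_of_pos_right (exp_pos 1)).1 (hb.trans_le hbe)
  have hG : Gtail s < 1 := by rw [hGs]; linarith
  calc ∫ t in (0:ℝ)..s, 1 / (M * Gtail t) = M⁻¹ * ∫ t in (0:ℝ)..s, (Gtail t)⁻¹ := by
        simp only [one_div, mul_inv]
        exact integral_const_mul _ _
    _ ≤ M⁻¹ * (40 / (Gtail s * √(log (Gtail s)⁻¹))) := by
        gcongr
        exact integral_inv_Gtail_le hs hG
    _ = 40 / (b * √(log (M / b))) := by
        rw [hGs, inv_div]
        field_simp
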